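/- arXiv:1510.01811 — 2 statements merged into one kernel-verified Lean document; each statement's English description precedes it below -/
import Mathlib

section
/- Let f_n : ℝ^p → ℝ be a sequence of convex functions converging pointwise to a convex function f : ℝ^p → ℝ that has a unique minimizer x* ∈ ℝ^p. If for each n the point x_n ∈ ℝ^p is a minimizer of f_n, then x_n → x* as n → ∞. -/
open Filter Topology

/-!
Pointwise convergence of convex functions on a finite-dimensional space is automatically locally
uniform: near any point they are eventually bounded above by their values at the vertices of a
surrounding simplex, hence (by convexity) bounded, hence uniformly Lipschitz. So on the sphere of
radius `ε` around `xstar`, where `g` exceeds its minimum by a definite amount, `f n` eventually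
exceeds `f n xstar`. A minimizer of `f n` outside the ball would then contradict convexity of `f n`
on the segment from `xstar` to it, which crosses the sphere.
-/

open Metric Set

lemma TendstoUniformlyOn.eventually_forall_gt {ι α : Type*} {l : Filter ι} {G : ι → α → ℝ}
    {h : α → ℝ} {s : Set α} {u v : ℝ}
    (hGh : TendstoUniformlyOn G h l s) (huv : u < v) (hh : ∀ x ∈ s, v ≤ h x) :
    ∀ᶠ i in l, ∀ x ∈ s, u < G i x := by
  filter_upwards [Metric.tendstoUniformlyOn_iff.1 hGh (v - u) (sub_pos.2 huv)] with i hi x hx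
  linarith [hh x hx, (abs_lt.1 (hi x hx)).2, Real.dist_eq (h x) (G i x)]

variable {E ι : Type*} [NormedAddCommGroup E] [NormedSpace ℝ E]
  {l : Filter ι} {F : ι → E → ℝ} {g : E → ℝ} {C : Set E} {x₀ : E} {r : ℝ}

lemma exists_ball_eventually_le_of_convexOn_of_tendsto [FiniteDimensional ℝ E] (hC : IsOpen C)
    (hF : ∀ i, ConvexOn ℝ C (F i)) (hFg : ∀ x ∈ C, Tendsto (F · x) l (𝓝 (g x))) (hx₀ : x₀ ∈ C) :
    ∃ r > 0, ball x₀ r ⊆ C ∧ ∃ M, ∀ᶠ i in l, ∀ y ∈ ball x₀ r, F i y ≤ M := by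
  obtain ⟨b, hx₀b, hbC⟩ := exists_mem_interior_convexHull_affineBasis (hC.mem_nhds hx₀)
  obtain ⟨r, hr, hrb⟩ := Metric.mem_nhds_iff.1 (isOpen_interior.mem_nhds hx₀b)
  have hb : range b ⊆ C := (subset_convexHull ℝ _).trans hbC
  obtain ⟨M, hM⟩ := ((finite_range b).image g).bddAbove
  refine ⟨r, hr, hrb.trans (interior_subset.trans hbC), M + 1, ?_⟩
  have hvertices : ∀ᶠ i in l, ∀ v ∈ range b, F i v ≤ M + 1 :=
    (finite_range b).eventually_all.2 fun v hv =>
      (hFg v (hb hv)).eventually_le_const (by linarith [hM (mem_image_of_mem g hv)])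
  filter_upwards [hvertices] with i hi y hy
  obtain ⟨v, hv, hyv⟩ := (hF i).exists_ge_of_mem_convexHull hb (interior_subset (hrb hy))
  exact hyv.trans (hi v hv)

/-- Midpoint convexity at `x₀` turns the upper bound at `2 • x₀ - y` into a lower bound at `y`. -/
lemma exists_eventually_abs_le_of_convexOn_of_eventually_le {a M : ℝ}
    (hF : ∀ i, ConvexOn ℝ (ball x₀ r) (F i)) (hFx₀ : Tendsto (F · x₀) l (𝓝 a))
    (hM : ∀ᶠ i in l, ∀ y ∈ ball x₀ r, F i y ≤ M) :
    ∃ B, ∀ᶠ i in l, ∀ y ∈ ball x₀ r, |F i y| ≤ B := by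
  refine ⟨|M| + 2 * |a| + 2, ?_⟩
  filter_upwards [hM, hFx₀.eventually_const_le (show a - 1 < a by linarith)] with i hiM hix₀ y hy
  have hy' : (2 : ℝ) • x₀ - y ∈ ball x₀ r := by
    rwa [mem_ball, dist_eq_norm, two_smul, add_sub_right_comm, add_sub_cancel_right, ← norm_neg,
      neg_sub, ← dist_eq_norm]
  have hmid : (1 / 2 : ℝ) • y + (1 / 2 : ℝ) • ((2 : ℝ) • x₀ - y) = x₀ := by
    rw [smul_sub, smul_smul]; norm_num
  have hconv := (hF i).2 hy hy' (by norm_num : (0 : ℝ) ≤ 1 / 2) (by norm_num : (0 : ℝ) ≤ 1 / 2)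
    (by norm_num)
  rw [hmid, smul_eq_mul, smul_eq_mul] at hconv
  rw [abs_le]
  constructor <;> linarith [hiM y hy, hiM _ hy', le_abs_self M, neg_abs_le M, le_abs_self a,
    neg_abs_le a]

lemma tendstoLocallyUniformlyOn_of_convexOn_of_tendsto [FiniteDimensional ℝ E] [l.NeBot]
    (hC : IsOpen C) (hF : ∀ i, ConvexOn ℝ C (F i)) (hFg : ∀ x ∈ C, Tendsto (F · x) l (𝓝 (g x))) :
    TendstoLocallyUniformlyOn F g l C := by
  refine Metric.tendstoLocallyUniformlyOn_iff.2 fun ε hε x hx => ?_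
  obtain ⟨r, hr, hrC, M, hM⟩ := exists_ball_eventually_le_of_convexOn_of_tendsto hC hF hFg hx
  have hFr : ∀ i, ConvexOn ℝ (ball x r) (F i) := fun i => (hF i).subset hrC (convex_ball x r)
  obtain ⟨B, hB⟩ := exists_eventually_abs_le_of_convexOn_of_eventually_le hFr (hFg x hx) hM
  set K := (2 * B / (r / 2)).toNNReal
  have hLip : ∀ᶠ i in l, LipschitzOnWith K (F i) (ball x (r / 2)) := by
    filter_upwards [hB] with i hi
    simpa [sub_half] using (hFr i).lipschitzOnWith_of_abs_le (half_pos hr) fun y hy => hi y hy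
  have hgLip : ∀ y ∈ ball x (r / 2), dist (g y) (g x) ≤ K * dist y x := fun y hy =>
    le_of_tendsto ((hFg y (hrC (ball_subset_ball (half_le_self hr.le) hy))).dist (hFg x hx)) <|
      hLip.mono fun i hi => hi.dist_le_mul y hy x (mem_ball_self (half_pos hr))
  have hnear : ∀ᶠ y in 𝓝 x, y ∈ ball x (r / 2) ∧ K * dist y x < ε / 4 := by
    refine (isOpen_ball.eventually_mem (mem_ball_self (half_pos hr))).and ?_
    have hK : Tendsto (fun y => (K : ℝ) * dist y x) (𝓝 x) (𝓝 0) :=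
      (show Continuous fun y => (K : ℝ) * dist y x by fun_prop).tendsto' x 0 (by simp)
    exact hK.eventually_lt_const (by positivity)
  refine ⟨_, mem_nhdsWithin_of_mem_nhds hnear, ?_⟩
  filter_upwards [hLip, Metric.tendsto_nhds.1 (hFg x hx) (ε / 2) (half_pos hε)] with i hi hix y hy
  calc dist (g y) (F i y) ≤ dist (g y) (g x) + dist (g x) (F i x) + dist (F i x) (F i y) :=
        dist_triangle4 _ _ _ _
    _ ≤ K * dist y x + dist (F i x) (g x) + K * dist x y := by
        gcongr
        · exact hgLip y hy.1
        · exact (dist_comm _ _).le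
        · exact hi.dist_le_mul x (mem_ball_self (half_pos hr)) y hy.1
    _ < ε := by rw [dist_comm x y]; linarith [hy.2]

lemma ConvexOn.dist_lt_of_le_of_forall_sphere_lt {f : E → ℝ} {y : E} (hf : ConvexOn ℝ C f)
    (hx₀ : x₀ ∈ C) (hy : y ∈ C) (hr : 0 < r) (hsphere : ∀ z ∈ sphere x₀ r, f x₀ < f z)
    (hfy : f y ≤ f x₀) : dist y x₀ < r := by
  by_contra! hry
  have hd : 0 < dist y x₀ := hr.trans_le hry
  set z := AffineMap.lineMap x₀ y (r / dist y x₀)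
  have hz : z ∈ sphere x₀ r := by
    rw [mem_sphere, dist_lineMap_left, Real.norm_of_nonneg (by positivity), dist_comm x₀ y,
      div_mul_cancel₀ _ hd.ne']
  have hzseg : z ∈ segment ℝ x₀ y := by
    rw [segment_eq_image_lineMap]
    exact mem_image_of_mem _ ⟨by positivity, (div_le_one hd).2 hry⟩
  have := hf.le_max_of_mem_segment hx₀ hy hzseg
  linarith [hsphere z hz, max_eq_left hfy]

theorem tendsto_argmin_of_convex_of_tendsto_pointwise_general
    {p : ℕ} (f : ℕ → EuclideanSpace ℝ (Fin p) → ℝ) (g : EuclideanSpace ℝ (Fin p) → ℝ)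
    (hfconv : ∀ n, ConvexOn ℝ Set.univ (f n))
    (hptwise : ∀ x, Tendsto (fun n => f n x) atTop (𝓝 (g x)))
    (xstar : EuclideanSpace ℝ (Fin p))
    (hmin : ∀ y, g xstar ≤ g y)
    (huniq : ∀ x, (∀ y, g x ≤ g y) → x = xstar)
    (x : ℕ → EuclideanSpace ℝ (Fin p))
    (hxmin : ∀ n y, f n (x n) ≤ f n y) :
    Tendsto x atTop (𝓝 xstar) := by
  have hlu : TendstoLocallyUniformlyOn f g atTop univ :=
    tendstoLocallyUniformlyOn_of_convexOn_of_tendsto isOpen_univ hfconv fun y _ => hptwise y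
  have hg : Continuous g := continuousOn_univ.1 <| hlu.continuousOn <|
    Frequently.of_forall fun n => (hfconv n).continuousOn isOpen_univ
  refine Metric.tendsto_nhds.2 fun ε hε => ?_
  have hsphere : ∀ z ∈ sphere xstar ε, g xstar < g z := fun z hz =>
    (hmin z).lt_of_ne fun h => ne_of_mem_sphere hz hε.ne' <| huniq z fun y => h ▸ hmin y
  obtain ⟨c, hc, hcg⟩ := (isCompact_sphere xstar ε).exists_forall_le' hg.continuousOn hsphere
  have hunif : TendstoUniformlyOn f g atTop (sphere xstar ε) :=
    (tendstoLocallyUniformlyOn_iff_tendstoUniformlyOn_of_compact (isCompact_sphere _ _)).1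
      (hlu.mono (subset_univ _))
  obtain ⟨m, hm, hmc⟩ := exists_between hc
  filter_upwards [hunif.eventually_forall_gt hmc hcg, (hptwise xstar).eventually_lt_const hm]
    with n hfar hnear
  exact (hfconv n).dist_lt_of_le_of_forall_sphere_lt (mem_univ _) (mem_univ _) hε
    (fun z hz => hnear.trans (hfar z hz)) (hxmin n xstar)

/-- If convex functions `f n : ℝ^p → ℝ` converge pointwise to a convex
function `g` with a unique minimizer `xstar`, and `x n` is a minimizer of `f n` for each `n`,
then `x n → xstar`. -/
theorem tendsto_argmin_of_convex_of_tendsto_pointwise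
    {p : ℕ} (f : ℕ → EuclideanSpace ℝ (Fin p) → ℝ) (g : EuclideanSpace ℝ (Fin p) → ℝ)
    (hfconv : ∀ n, ConvexOn ℝ Set.univ (f n))
    (hgconv : ConvexOn ℝ Set.univ g)
    (hptwise : ∀ x, Tendsto (fun n => f n x) atTop (𝓝 (g x)))
    (xstar : EuclideanSpace ℝ (Fin p))
    (hmin : ∀ y, g xstar ≤ g y)
    (huniq : ∀ x, (∀ y, g x ≤ g y) → x = xstar)
    (x : ℕ → EuclideanSpace ℝ (Fin p))
    (hxmin : ∀ n y, f n (x n) ≤ f n y) :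
    Tendsto x atTop (𝓝 xstar) :=
  tendsto_argmin_of_convex_of_tendsto_pointwise_general f g hfconv hptwise xstar hmin huniq x hxmin
end

section
/- Let T_n and T be measurable random elements of C(ℝ^p, ℝ), the space of continuous real-valued functions on ℝ^p with the topology of uniform convergence on compact sets, defined on a probability space. Assume that almost surely each T_n(ω) and T(ω) is a convex function, that T almost surely has a unique minimizer κ(ω) ∈ ℝ^p, and that for each n, κ_n(ω) is a measurable selection of minimizers of T_n(ω). If the laws of T_n converge weakly to the law of T on C(ℝ^p, ℝ), then κ_n converges in distribution to κ. -/
/-!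
If `κₙ` lies in a closed set `F`, then `Tₙ` is a convex function minimized in `F`, hence lies in
the closure `C_F` of the set of such functions. By the portmanteau theorem,
`limsup P(κₙ ∈ F) ≤ limsup P(Tₙ ∈ C_F) ≤ P(T₀ ∈ C_F)`. A continuous function whose unique
minimizer lies outside `F` is not in `C_F`, so `P(T₀ ∈ C_F) ≤ P(κ ∈ F)`, and the portmanteau
theorem in the other direction gives `κₙ → κ` in distribution.
-/

open MeasureTheory Filter Topology

noncomputable section

/-- Borel σ-algebra on the space `C(ℝ^p, ℝ)` of continuous functions with the topology of
uniform convergence on compact sets (the compact-open topology). -/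
instance (p : ℕ) : MeasurableSpace C(EuclideanSpace ℝ (Fin p), ℝ) := borel _

instance (p : ℕ) : BorelSpace C(EuclideanSpace ℝ (Fin p), ℝ) := ⟨rfl⟩

/-- Convergence in distribution of random elements of a topological space `E`:
weak convergence of the laws, expressed through bounded continuous test functions. -/
def TendstoInDistribution {Ω E : Type*} [MeasurableSpace Ω] [TopologicalSpace E]
    (P : Measure Ω) (X : ℕ → Ω → E) (Y : Ω → E) : Prop :=
  ∀ f : BoundedContinuousFunction E ℝ,
    Tendsto (fun n => ∫ ω, f (X n ω) ∂P) atTop (𝓝 (∫ ω, f (Y ω) ∂P))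

open Metric Set

section ConvexMinimizers

variable {E : Type*} [NormedAddCommGroup E] [NormedSpace ℝ E]

def convexMinimizedIn (F : Set E) : Set C(E, ℝ) :=
  {g | ConvexOn ℝ univ g ∧ ∃ z ∈ F, ∀ y, g z ≤ g y}

lemma ConvexOn.exists_mem_sphere_le {g : E → ℝ} (hg : ConvexOn ℝ univ g) {x z : E}
    (hzx : g z ≤ g x) {δ : ℝ} (hδ : 0 ≤ δ) (hδz : δ ≤ dist x z) :
    ∃ w ∈ sphere x δ, g w ≤ g x := by
  rcases hδ.eq_or_lt with rfl | hδpos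
  · exact ⟨x, by simp, le_rfl⟩
  have hdist : 0 < dist x z := hδpos.trans_le hδz
  set c := δ / dist x z
  have hc : c ∈ Icc (0 : ℝ) 1 := ⟨by positivity, div_le_one_of_le₀ hδz dist_nonneg⟩
  refine ⟨AffineMap.lineMap x z c, ?_, ?_⟩
  · rw [mem_sphere, dist_lineMap_left, Real.norm_of_nonneg hc.1, div_mul_cancel₀ _ hdist.ne']
  · calc g (AffineMap.lineMap x z c) ≤ max (g x) (g z) :=
          hg.le_on_segment (mem_univ x) (mem_univ z)
            ((segment_eq_image_lineMap ℝ x z).symm ▸ mem_image_of_mem _ hc)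
      _ = g x := max_eq_left hzx

variable [ProperSpace E]

/-- On a sphere around `x₀` avoiding `F`, `f` exceeds `f x₀` by a uniform margin, while a convex
function minimized in `F` takes a value at most its value at `x₀` somewhere on that sphere, so it
cannot be uniformly close to `f` on the enclosed ball. -/
lemma notMem_closure_convexMinimizedIn {F : Set E} (hF : IsClosed F) {f : C(E, ℝ)} {x₀ : E}
    (hmin : ∀ y, f x₀ ≤ f y) (huniq : ∀ x, (∀ y, f x ≤ f y) → x = x₀) (hx₀ : x₀ ∉ F) :
    f ∉ closure (convexMinimizedIn F) := by
  obtain ⟨δ, hδ, hball⟩ := isOpen_iff.mp hF.isOpen_compl x₀ hx₀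
  have hfar : ∀ z ∈ F, δ ≤ dist x₀ z := fun z hz ↦ by
    simpa [dist_comm] using fun h ↦ hball h hz
  obtain ⟨a, hfa, ha⟩ := (isCompact_sphere x₀ δ).exists_forall_le' f.continuous.continuousOn
    (a := f x₀) fun y hy ↦ (hmin y).lt_of_ne fun heq ↦
      ne_of_mem_sphere hy hδ.ne' (huniq y fun z ↦ heq ▸ hmin z)
  have hnear : ∀ᶠ g in 𝓝 f, ∀ y ∈ closedBall x₀ δ, dist (f y) (g y) < (a - f x₀) / 2 :=
    Metric.tendstoUniformlyOn_iff.mp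
      (ContinuousMap.tendsto_iff_forall_isCompact_tendstoUniformlyOn.mp tendsto_id _
        (isCompact_closedBall x₀ δ)) _ (by linarith)
  intro hf
  obtain ⟨g, ⟨hg, z, hzF, hz⟩, hgf⟩ := (mem_closure_iff_frequently.mp hf).and_eventually hnear
    |>.exists
  obtain ⟨w, hw, hgw⟩ := hg.exists_mem_sphere_le (hz x₀) hδ.le (hfar z hzF)
  have hfw := hgf w (sphere_subset_closedBall hw)
  have hfx₀ := hgf x₀ (mem_closedBall_self hδ.le)
  rw [Real.dist_eq, abs_lt] at hfw hfx₀
  linarith [ha w hw]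

end ConvexMinimizers

section ConvergenceInDistribution

variable {Ω E : Type*} [MeasurableSpace Ω] {P : Measure Ω} [IsProbabilityMeasure P]
  [TopologicalSpace E] [MeasurableSpace E] [OpensMeasurableSpace E]

lemma tendstoInDistribution_iff {X : ℕ → Ω → E} {Y : Ω → E} (hX : ∀ n, AEMeasurable (X n) P)
    (hY : AEMeasurable Y P) :
    _root_.TendstoInDistribution P X Y ↔
      MeasureTheory.TendstoInDistribution X atTop Y (fun _ ↦ P) P := by
  have integral_map_law {Z : Ω → E} (hZ : AEMeasurable Z P) (f : BoundedContinuousFunction E ℝ) :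
      ∫ x, f x ∂(P.map Z) = ∫ ω, f (Z ω) ∂P :=
    integral_map hZ f.continuous.aestronglyMeasurable
  refine ⟨fun h ↦ ⟨hX, hY, ?_⟩, fun h f ↦ ?_⟩
  · refine ProbabilityMeasure.tendsto_iff_forall_integral_tendsto.mpr fun f ↦ ?_
    simpa only [ProbabilityMeasure.coe_mk, integral_map_law (hX _), integral_map_law hY] using h f
  · simpa only [ProbabilityMeasure.coe_mk, integral_map_law (hX _), integral_map_law hY] using
      ProbabilityMeasure.tendsto_iff_forall_integral_tendsto.mp h.tendsto f

lemma MeasureTheory.TendstoInDistribution.limsup_measure_preimage_le [HasOuterApproxClosed E]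
    {X : ℕ → Ω → E} {Y : Ω → E} (h : TendstoInDistribution X atTop Y (fun _ ↦ P) P)
    {C : Set E} (hC : IsClosed C) :
    limsup (fun n ↦ P (X n ⁻¹' C)) atTop ≤ P (Y ⁻¹' C) := by
  simpa only [ProbabilityMeasure.coe_mk, Measure.map_apply_of_aemeasurable
    (h.forall_aemeasurable _) hC.measurableSet, Measure.map_apply_of_aemeasurable
    h.aemeasurable_limit hC.measurableSet] using
    ProbabilityMeasure.limsup_measure_closed_le_of_tendsto h.tendsto hC

lemma MeasureTheory.tendstoInDistribution_of_forall_isClosed_limsup_le {X : ℕ → Ω → E}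
    {Y : Ω → E} (hX : ∀ n, AEMeasurable (X n) P) (hY : AEMeasurable Y P)
    (h : ∀ C, IsClosed C → limsup (fun n ↦ P (X n ⁻¹' C)) atTop ≤ P (Y ⁻¹' C)) :
    TendstoInDistribution X atTop Y (fun _ ↦ P) P :=
  ⟨hX, hY, tendsto_of_forall_isClosed_limsup_le' fun C hC ↦ by
    simpa only [ProbabilityMeasure.coe_mk, Measure.map_apply_of_aemeasurable (hX _)
      hC.measurableSet, Measure.map_apply_of_aemeasurable hY hC.measurableSet] using h C hC⟩

variable {E' : Type*} [TopologicalSpace E'] [MeasurableSpace E'] [OpensMeasurableSpace E']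

lemma MeasureTheory.TendstoInDistribution.of_forall_isClosed_exists_preimage_ae_le
    [HasOuterApproxClosed E] {X : ℕ → Ω → E} {Y : Ω → E}
    (h : TendstoInDistribution X atTop Y (fun _ ↦ P) P) {U : ℕ → Ω → E'} {V : Ω → E'}
    (hU : ∀ n, AEMeasurable (U n) P) (hV : AEMeasurable V P)
    (hUX : ∀ K, IsClosed K → ∃ C, IsClosed C ∧
      (∀ n, U n ⁻¹' K ≤ᵐ[P] X n ⁻¹' C) ∧ Y ⁻¹' C ≤ᵐ[P] V ⁻¹' K) :
    TendstoInDistribution U atTop V (fun _ ↦ P) P := by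
  refine tendstoInDistribution_of_forall_isClosed_limsup_le hU hV fun K hK ↦ ?_
  obtain ⟨C, hC, hUXn, hYV⟩ := hUX K hK
  calc limsup (fun n ↦ P (U n ⁻¹' K)) atTop
      ≤ limsup (fun n ↦ P (X n ⁻¹' C)) atTop :=
        limsup_le_limsup (.of_forall fun n ↦ measure_mono_ae (hUXn n))
    _ ≤ P (Y ⁻¹' C) := h.limsup_measure_preimage_le hC
    _ ≤ P (V ⁻¹' K) := measure_mono_ae hYV

end ConvergenceInDistribution

theorem tendsto_in_distribution_argmin_of_convex_general
    {p : ℕ} {Ω : Type*} [MeasurableSpace Ω] (P : Measure Ω) [IsProbabilityMeasure P]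
    (T : ℕ → Ω → C(EuclideanSpace ℝ (Fin p), ℝ))
    (T₀ : Ω → C(EuclideanSpace ℝ (Fin p), ℝ))
    (κn : ℕ → Ω → EuclideanSpace ℝ (Fin p)) (κ : Ω → EuclideanSpace ℝ (Fin p))
    (hTmeas : ∀ n, Measurable (T n)) (hT₀meas : Measurable T₀)
    (hκnmeas : ∀ n, Measurable (κn n)) (hκmeas : Measurable κ)
    (hTconv : ∀ n, ∀ᵐ ω ∂P, ConvexOn ℝ Set.univ (T n ω))
    (hκmin : ∀ᵐ ω ∂P, (∀ y, T₀ ω (κ ω) ≤ T₀ ω y) ∧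
      ∀ x, (∀ y, T₀ ω x ≤ T₀ ω y) → x = κ ω)
    (hκnmin : ∀ n, ∀ᵐ ω ∂P, ∀ y, T n ω (κn n ω) ≤ T n ω y)
    (hweak : TendstoInDistribution P T T₀) :
    TendstoInDistribution P κn κ := by
  have hκn : ∀ n, AEMeasurable (κn n) P := fun n ↦ (hκnmeas n).aemeasurable
  have hT := (tendstoInDistribution_iff (fun n ↦ (hTmeas n).aemeasurable)
    hT₀meas.aemeasurable).mp hweak
  refine (tendstoInDistribution_iff hκn hκmeas.aemeasurable).mpr <|
    hT.of_forall_isClosed_exists_preimage_ae_le hκn hκmeas.aemeasurable fun F hF ↦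
      ⟨closure (convexMinimizedIn F), isClosed_closure, fun n ↦ ?_, ?_⟩
  · filter_upwards [hTconv n, hκnmin n] with ω hconv hmin hκF
    exact subset_closure ⟨hconv, κn n ω, hκF, hmin⟩
  · filter_upwards [hκmin] with ω ⟨hmin, huniq⟩ hT₀C
    by_contra hκF
    exact notMem_closure_convexMinimizedIn hF hmin huniq hκF hT₀C

/-- Lemma 1 of the paper; Lemma 2.2 of Davis, Knight and Liu (1992).
If random convex functions `T n` converge in distribution (on `C(ℝ^p, ℝ)` with the topology of
uniform convergence on compact sets) to a random convex function `T₀` which a.s. has a unique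
minimizer `κ`, and `κn n` is a measurable selection of minimizers of `T n`, then
`κn` converges in distribution to `κ`. -/
theorem tendsto_in_distribution_argmin_of_convex
    {p : ℕ} {Ω : Type*} [MeasurableSpace Ω] (P : Measure Ω) [IsProbabilityMeasure P]
    (T : ℕ → Ω → C(EuclideanSpace ℝ (Fin p), ℝ))
    (T₀ : Ω → C(EuclideanSpace ℝ (Fin p), ℝ))
    (κn : ℕ → Ω → EuclideanSpace ℝ (Fin p)) (κ : Ω → EuclideanSpace ℝ (Fin p))
    (hTmeas : ∀ n, Measurable (T n)) (hT₀meas : Measurable T₀)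
    (hκnmeas : ∀ n, Measurable (κn n)) (hκmeas : Measurable κ)
    (hTconv : ∀ n, ∀ᵐ ω ∂P, ConvexOn ℝ Set.univ (T n ω))
    (hT₀conv : ∀ᵐ ω ∂P, ConvexOn ℝ Set.univ (T₀ ω))
    (hκmin : ∀ᵐ ω ∂P, (∀ y, T₀ ω (κ ω) ≤ T₀ ω y) ∧
      ∀ x, (∀ y, T₀ ω x ≤ T₀ ω y) → x = κ ω)
    (hκnmin : ∀ n, ∀ᵐ ω ∂P, ∀ y, T n ω (κn n ω) ≤ T n ω y)
    (hweak : TendstoInDistribution P T T₀) :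
    TendstoInDistribution P κn κ :=
  tendsto_in_distribution_argmin_of_convex_general P T T₀ κn κ hTmeas hT₀meas hκnmeas hκmeas hTconv
    hκmin hκnmin hweak
end
end
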